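/- arXiv:1705.04022 — 3 statements merged into one kernel-verified Lean document; each statement's English description precedes it below -/
import Mathlib

section
/- Let x be a string of length n and y, z two length-m factors of x starting at positions i and j respectively (so y = x[i..i+m-1], z = x[j..j+m-1]), with d_H(y,z) = 1. Let L = ⌊m/3⌋. Then there exist positions i' with i ≤ i' ≤ i+m-L, i' ≡ 0 (mod L), and j' = j + (i'-i), such that x[i'..i'+L-1] = x[j'..j'+L-1]. -/
/-!
The single mismatch of the two windows lies in at most one of two consecutive blocks
`[a, a + L)` and `[a + L, a + 2L)` aligned to multiples of `L`; taking `a` the first multiple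
of `L` after `i`, both blocks lie inside `[i, i + 3L) ⊆ [i, i + m)`, and the block avoiding the
mismatch gives the common factor.
-/

/-- The length-`m` factor of `x` starting at position `p` (requires `p + m ≤ n`). -/
def window {α : Type*} {n : ℕ} (x : Fin n → α) (p m : ℕ) (h : p + m ≤ n) : Fin m → α :=
  fun k => x ⟨p + k, by have := k.isLt; omega⟩

theorem exists_forall_ne_eq_of_hammingDist_eq_one {ι β : Type*} [Fintype ι] [DecidableEq β]
    {f g : ι → β} (h : hammingDist f g = 1) : ∃ k, ∀ s, s ≠ k → f s = g s := by
  obtain ⟨k, hk⟩ := Finset.card_eq_one.mp h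
  refine ⟨k, fun s hs => by_contra fun hne => hs ?_⟩
  have hmem : s ∈ ({k} : Finset ι) := hk ▸ Finset.mem_filter.mpr ⟨Finset.mem_univ s, hne⟩
  exact Finset.mem_singleton.mp hmem

section window

variable {α : Type*} {n : ℕ}

theorem window_window (x : Fin n → α) {p m a L q : ℕ} (h : p + m ≤ n) (ha : a + L ≤ m)
    (hq : p + a = q) :
    window (window x p m h) a L ha = window x q L (by omega) := by
  funext t
  simp only [window, ← hq, Nat.add_assoc]

theorem window_congr_of_forall_ne {m : ℕ} {f g : Fin m → α} {k : Fin m}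
    (hfg : ∀ s, s ≠ k → f s = g s) {a L : ℕ} (h : a + L ≤ m) (hk : k < a ∨ a + L ≤ k) :
    window f a L h = window g a L h := by
  funext t
  refine hfg _ fun hs => ?_
  have hkt : (k : ℕ) = a + t := congrArg Fin.val hs.symm
  omega

end window

theorem exists_mod_eq_zero_block_avoiding {L : ℕ} (hL : 0 < L) (i p : ℕ) :
    ∃ i', i ≤ i' ∧ i' + L ≤ i + 3 * L ∧ i' % L = 0 ∧ (p < i' ∨ i' + L ≤ p) := by
  have hlo := Nat.lt_div_mul_add (a := i) hL
  have hhi := Nat.div_mul_le_self i L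
  by_cases hp : p < i / L * L + L ∨ i / L * L + 2 * L ≤ p
  · refine ⟨i / L * L + L, by omega, by omega, ?_, by omega⟩
    simp
  · refine ⟨i / L * L + 2 * L, by omega, by omega, ?_, by omega⟩
    simp

/-- If the windows of length m at positions i and j of x are at Hamming
distance 1, and L = ⌊m/3⌋, then there is a position i' with i ≤ i' ≤ i+m-L, i' ≡ 0 (mod L),
such that x[i'..i'+L-1] = x[j'..j'+L-1] where j' = j + (i' - i). -/
theorem stmt_2 {α : Type*} [DecidableEq α] {n m i j : ℕ} (hm : 3 ≤ m)
    (x : Fin n → α) (hi : i + m ≤ n) (hj : j + m ≤ n)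
    (h : hammingDist (window x i m hi) (window x j m hj) = 1) :
    ∃ i', ∃ (h1 : i ≤ i') (h2 : i' + m / 3 ≤ i + m), i' % (m / 3) = 0 ∧
      window x i' (m / 3) (by omega) =
      window x (j + (i' - i)) (m / 3) (by omega) := by
  obtain ⟨k, hk⟩ := exists_forall_ne_eq_of_hammingDist_eq_one h
  obtain ⟨i', hii', hi'm, hmod, havoid⟩ :=
    exists_mod_eq_zero_block_avoiding (L := m / 3) (by omega) i (i + k)
  refine ⟨i', hii', by omega, hmod, ?_⟩
  have hblock : i' - i + m / 3 ≤ m := by omega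
  have hsame := window_congr_of_forall_ne hk hblock (by omega)
  rwa [window_window x hi hblock (by omega : i + (i' - i) = i'),
    window_window x hj hblock rfl] at hsame
end

section
/- Fix a string x of length n and integers m ≥ 3, L = ⌊m/3⌋. For positions p, p' with x[p..p+m-1] ≈₁ x[p'..p'+m-1] (Hamming distance exactly 1 with mismatch at offset d, i.e., x[p+d] ≠ x[p'+d] and x[p+e] = x[p'+e] for all other offsets e < m), define t(p,p') = the number of multiples qL of L with p ≤ qL, qL + L ≤ p + m, and the block [qL - p, qL - p + L - 1] (in window offsets) not containing d, such that the corresponding aligned block in the other window matches. Then t(p,p') equals the number of offsets b ∈ {0,...,m-L} with (p+b) ≡ 0 mod L and the interval [b, b+L-1] not containing d, and t(p,p') ≥ 1. -/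
/-!
Every window offset `b` with `p + b ≡ 0 (mod L)` corresponds to exactly one block start
`q L = p + b`, and a block avoiding the mismatch offset matches automatically, since the two
windows agree everywhere else. At least one such block exists: the first two aligned offsets
`b₀ < L` and `b₀ + L` both fit in the window because `3 L ≤ m`, and their blocks are disjoint,
so `d` lies in at most one of them.
-/

open Finset

theorem apply_eq_of_offset_ne {α : Type*} {n m p p' d : ℕ} {x : Fin n → α}
    (hp : p + m ≤ n) (hp' : p' + m ≤ n)
    (hmatch : ∀ e, ∀ he : e < m, e ≠ d → x ⟨p + e, (Nat.add_lt_add_left he p).trans_le hp⟩ =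
      x ⟨p' + e, (Nat.add_lt_add_left he p').trans_le hp'⟩)
    {i j : Fin n} {e : ℕ} (hi : (i : ℕ) = p + e) (hj : (j : ℕ) = p' + e) (he : e < m)
    (hed : e ≠ d) : x i = x j := by
  rw [show i = ⟨p + e, by omega⟩ from Fin.ext hi, show j = ⟨p' + e, by omega⟩ from Fin.ext hj]
  exact hmatch e he hed

theorem card_filter_aligned_blocks_eq {L m : ℕ} (hL : 0 < L) (hLm : L ≤ m) (p : ℕ) (P : ℕ → Prop)
    [DecidablePred P] :
    ((range (p + m + 1)).filter (fun q => p ≤ q * L ∧ q * L + L ≤ p + m ∧ P (q * L - p))).card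
      = ((range (m - L + 1)).filter (fun b => (p + b) % L = 0 ∧ P b)).card := by
  apply card_bij (fun q _ => q * L - p)
  · intro q hq
    simp only [mem_filter, mem_range] at hq ⊢
    obtain ⟨-, hpq, hqm, hP⟩ := hq
    refine ⟨by omega, ?_, hP⟩
    rw [Nat.add_sub_cancel' hpq, Nat.mul_mod_left]
  · intro q₁ hq₁ q₂ hq₂ h
    simp only [mem_filter, mem_range] at hq₁ hq₂
    exact Nat.eq_of_mul_eq_mul_right hL (by omega)
  · intro b hb
    simp only [mem_filter, mem_range] at hb
    obtain ⟨hbm, hdvd, hP⟩ := hb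
    have hq : (p + b) / L * L = p + b := Nat.div_mul_cancel (Nat.dvd_of_mod_eq_zero hdvd)
    have hle : (p + b) / L ≤ p + b := Nat.div_le_self _ _
    refine ⟨(p + b) / L, ?_, by omega⟩
    simp only [mem_filter, mem_range, hq, Nat.add_sub_cancel_left]
    exact ⟨by omega, by omega, by omega, hP⟩

theorem card_pos_filter_aligned_avoiding {L m : ℕ} (hL : 0 < L) (hLm : 3 * L ≤ m) (p d : ℕ) :
    0 < ((range (m - L + 1)).filter (fun b => (p + b) % L = 0 ∧ ¬(b ≤ d ∧ d < b + L))).card := by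
  obtain ⟨b₀, hb₀, haligned⟩ : ∃ b₀ < L, (p + b₀) % L = 0 := by
    refine ⟨(L - p % L) % L, Nat.mod_lt _ hL, ?_⟩
    have := Nat.mod_lt p hL
    have := Nat.mod_le p L
    rw [Nat.add_mod_mod, show p + (L - p % L) = p - p % L + L by omega, Nat.add_mod_right]
    exact Nat.mod_eq_zero_of_dvd (Nat.dvd_sub_mod p)
  have haligned' : (p + (b₀ + L)) % L = 0 := by rwa [← add_assoc, Nat.add_mod_right]
  rw [card_pos]
  by_cases hd : b₀ ≤ d ∧ d < b₀ + L
  · exact ⟨b₀ + L, by simp only [mem_filter, mem_range]; omega⟩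
  · exact ⟨b₀, by simp only [mem_filter, mem_range]; omega⟩

open scoped Classical in
/-- Fix x of length n, m ≥ 3, L = ⌊m/3⌋, and windows at p, p' of length m at
Hamming distance exactly 1 with unique mismatch offset d. Then the number t(p,p') of
aligned blocks [qL, qL+L-1] fully inside the window at p, avoiding the mismatch offset,
and matching the corresponding aligned block of the window at p', equals the number of
offsets b ∈ {0,…,m-L} with (p+b) ≡ 0 (mod L) and d ∉ [b, b+L-1]; moreover t(p,p') ≥ 1. -/
theorem stmt_6 {α : Type*} [DecidableEq α] {n m p p' d : ℕ} (hm : 3 ≤ m)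
    (x : Fin n → α) (hp : p + m ≤ n) (hp' : p' + m ≤ n)
    (hmatch : ∀ e, ∀ _he : e < m, e ≠ d → x ⟨p + e, by omega⟩ = x ⟨p' + e, by omega⟩) :
    ((Finset.range (p + m + 1)).filter (fun q =>
        p ≤ q * (m / 3) ∧ q * (m / 3) + m / 3 ≤ p + m ∧
        ¬(q * (m / 3) - p ≤ d ∧ d < q * (m / 3) - p + m / 3) ∧
        ∀ t, t < m / 3 → ∀ (h1 : q * (m / 3) + t < n) (h2 : p' + (q * (m / 3) - p) + t < n),
          x ⟨q * (m / 3) + t, h1⟩ = x ⟨p' + (q * (m / 3) - p) + t, h2⟩)).card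
      = ((Finset.range (m - m / 3 + 1)).filter (fun b =>
          (p + b) % (m / 3) = 0 ∧ ¬(b ≤ d ∧ d < b + m / 3))).card ∧
    1 ≤ ((Finset.range (p + m + 1)).filter (fun q =>
        p ≤ q * (m / 3) ∧ q * (m / 3) + m / 3 ≤ p + m ∧
        ¬(q * (m / 3) - p ≤ d ∧ d < q * (m / 3) - p + m / 3) ∧
        ∀ t, t < m / 3 → ∀ (h1 : q * (m / 3) + t < n) (h2 : p' + (q * (m / 3) - p) + t < n),
          x ⟨q * (m / 3) + t, h1⟩ = x ⟨p' + (q * (m / 3) - p) + t, h2⟩)).card := by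
  have hL : 0 < m / 3 := by omega
  rw [filter_congr (q := fun q => p ≤ q * (m / 3) ∧ q * (m / 3) + m / 3 ≤ p + m ∧
      ¬(q * (m / 3) - p ≤ d ∧ d < q * (m / 3) - p + m / 3)) fun q _ => ?_,
    card_filter_aligned_blocks_eq hL (by omega) p (fun b => ¬(b ≤ d ∧ d < b + m / 3))]
  · exact ⟨rfl, card_pos_filter_aligned_avoiding hL (by omega) p d⟩
  refine ⟨fun h => ⟨h.1, h.2.1, h.2.2.1⟩, ?_⟩
  rintro ⟨hpq, hqm, hqd⟩
  exact ⟨hpq, hqm, hqd, fun t ht _ _ => apply_eq_of_offset_ne hp hp' hmatch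
    (e := q * (m / 3) - p + t) (by simp only; omega) (by simp only; omega) (by omega) (by omega)⟩
end

section
/- Let n, m, σ be positive integers with σ ≥ 2 and m ≥ 3·(log n / log σ) + 3 and m > 3. Then with L = ⌊m/3⌋ and B = ⌊n/L⌋, the quantity m·B·n / σ^L is at most 12·n. -/
/-! The block count `B = ⌊n/L⌋` satisfies `m·B ≤ 5n` since `m ≤ 3L + 2 ≤ 5L`, and the hypothesis on
`m` gives `log n ≤ L·log σ`, i.e. `n ≤ σ^L`. Hence `m·B·n/σ^L ≤ 5n ≤ 12n`. -/

theorem Nat.mul_div_div_three_le (m n : ℕ) : m * (n / (m / 3)) ≤ 5 * n := by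
  rcases Nat.eq_zero_or_pos (m / 3) with hL | hL
  · simp [hL]
  · have hmL : m ≤ 5 * (m / 3) := by omega
    calc m * (n / (m / 3)) ≤ 5 * (m / 3) * (n / (m / 3)) := Nat.mul_le_mul_right _ hmL
      _ = 5 * ((n / (m / 3)) * (m / 3)) := by ring
      _ ≤ 5 * n := Nat.mul_le_mul_left 5 (Nat.div_mul_le_self n _)

theorem Nat.le_pow_of_log_le_mul_log {n σ L : ℕ} (hσ : 0 < σ)
    (h : Real.log n ≤ L * Real.log σ) : n ≤ σ ^ L := by
  rcases Nat.eq_zero_or_pos n with rfl | hn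
  · exact Nat.zero_le _
  · rw [← Real.log_pow] at h
    exact_mod_cast (Real.log_le_log_iff (by positivity) (by positivity)).mp h

theorem log_le_div_three_mul_log {n m σ : ℕ} (hσ : 1 < σ)
    (hcond : 3 * Real.log n / Real.log σ + 3 ≤ (m : ℝ)) :
    Real.log n ≤ (m / 3 : ℕ) * Real.log σ := by
  have hlogσ : 0 < Real.log σ := Real.log_pos (by exact_mod_cast hσ)
  have hm : (m : ℝ) ≤ 3 * (m / 3 : ℕ) + 2 := by exact_mod_cast (by omega : m ≤ 3 * (m / 3) + 2)
  have h : 3 * Real.log n ≤ ((m : ℝ) - 3) * Real.log σ :=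
    (div_le_iff₀ hlogσ).mp (by linarith)
  nlinarith

theorem stmt_12_general (n m σ : ℕ) (hσ : 2 ≤ σ)
    (hcond : 3 * Real.log n / Real.log σ + 3 ≤ (m : ℝ)) :
    (m : ℝ) * (↑(n / (m / 3)) : ℝ) * (n : ℝ) / (σ : ℝ) ^ (m / 3) ≤ 12 * (n : ℝ) := by
  have hmB : (m : ℝ) * (↑(n / (m / 3)) : ℝ) ≤ 5 * n := by
    exact_mod_cast Nat.mul_div_div_three_le m n
  have hnσ : (n : ℝ) ≤ (σ : ℝ) ^ (m / 3) := by
    exact_mod_cast Nat.le_pow_of_log_le_mul_log (by omega) (log_le_div_three_mul_log hσ hcond)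
  have hσL : (0 : ℝ) < (σ : ℝ) ^ (m / 3) := by positivity
  calc (m : ℝ) * (↑(n / (m / 3)) : ℝ) * n / (σ : ℝ) ^ (m / 3)
      ≤ 5 * n * ((n : ℝ) / (σ : ℝ) ^ (m / 3)) := by
        rw [mul_div_assoc]; gcongr
    _ ≤ 5 * n * 1 := by gcongr; exact (div_le_one hσL).mpr hnσ
    _ ≤ 12 * n := by linarith [(n.cast_nonneg : (0 : ℝ) ≤ n)]

/-- For positive integers n, m, σ with n ≥ 2, σ ≥ 2, m > 3 and
m ≥ 3·(log n / log σ) + 3, setting L = ⌊m/3⌋ and B = ⌊n/L⌋, we have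
m·B·n / σ^L ≤ 12·n. -/
theorem stmt_12 (n m σ : ℕ) (hn : 2 ≤ n) (hσ : 2 ≤ σ) (hm : 3 < m)
    (hcond : 3 * Real.log n / Real.log σ + 3 ≤ (m : ℝ)) :
    (m : ℝ) * (↑(n / (m / 3)) : ℝ) * (n : ℝ) / (σ : ℝ) ^ (m / 3) ≤ 12 * (n : ℝ) :=
  stmt_12_general n m σ hσ hcond
end
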